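/- Let n ≥ 4, and let ζ ∈ T_n be the idempotent of rank n−1 with ζ(2) = 1 and ζ(i) = i for all i ≠ 2. If u, v are products of the form u = u₁ · ζ · u₂ and v = v₁ · ζ · v₂ in T_n, where u₁, v₁ ∈ S_n are permutations and u₂, v₂ ∈ T_n are arbitrary, u = v, and both u and v have rank n − 1, then u₁⁻¹ · v₁ stabilizes the set {1, 2} setwise. -/

import Mathlib

/-- The full transformation monoid `T_n` on `{1, ..., n}` is modelled by functions
`Fin (n+1) → Fin (n+1)` fixing the unused point `0` and mapping nonzero points to
nonzero points; composition is left-to-right. -/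
def IsTn (n : ℕ) (f : Fin (n + 1) → Fin (n + 1)) : Prop :=
  f 0 = 0 ∧ ∀ x : Fin (n + 1), x ≠ 0 → f x ≠ 0

/-- The rank of a transformation: the number of nonzero points in its image. -/
def prank (n : ℕ) (f : Fin (n + 1) → Fin (n + 1)) : ℕ :=
  ((Finset.univ.image f).erase 0).card

/-- The idempotent `ζ ∈ T_n` of rank `n - 1` with `ζ(2) = 1` and `ζ(i) = i` otherwise. -/
def zetaMap (n : ℕ) : Fin (n + 1) → Fin (n + 1) := fun x => if x = 2 then 1 else x

/-!
Write `v = v₁ζv₂`. Since `v₁` is a bijection, the image of `v` is `v₂` applied to the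
image `{1, ..., n} \ {2}` of `ζ` (together with `0`), so rank `n - 1` forces `v₂` to be
injective there. The points `a = u₁⁻¹(1)` and `b = u₁⁻¹(2)` are identified by `u = v`,
hence `ζ(v₁ a) = ζ(v₁ b)` with `v₁ a ≠ v₁ b`, and the only pair of distinct points that
`ζ` identifies is `{1, 2}`.
-/

lemma fin_two_ne_zero_and_two_ne_one {n : ℕ} (hn : 2 ≤ n) :
    (2 : Fin (n + 1)) ≠ 0 ∧ (2 : Fin (n + 1)) ≠ 1 := by
  constructor <;> simp [Fin.ext_iff, Nat.mod_eq_of_lt (show 2 < n + 1 by omega),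
    Nat.mod_eq_of_lt (show 1 < n + 1 by omega)]

namespace zetaMap

variable {n : ℕ}

lemma ne_two (h21 : (2 : Fin (n + 1)) ≠ 1) (x : Fin (n + 1)) : zetaMap n x ≠ 2 := by
  unfold zetaMap
  split_ifs with hx
  · exact h21.symm
  · exact hx

lemma image_univ (h21 : (2 : Fin (n + 1)) ≠ 1) :
    Finset.univ.image (zetaMap n) = Finset.univ.erase 2 := by
  ext z
  simp only [Finset.mem_image, Finset.mem_univ, true_and, Finset.mem_erase, and_true]
  constructor
  · rintro ⟨x, rfl⟩
    exact ne_two h21 x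
  · intro hz
    exact ⟨z, if_neg hz⟩

lemma pair_eq_of_eq {x y : Fin (n + 1)} (h : zetaMap n x = zetaMap n y) (hxy : x ≠ y) :
    ({x, y} : Set (Fin (n + 1))) = {1, 2} := by
  unfold zetaMap at h
  split_ifs at h with hx hy hy
  · exact absurd (hx.trans hy.symm) hxy
  · rw [hx, ← h, Set.pair_comm]
  · rw [h, hy]
  · exact absurd h hxy

end zetaMap

lemma injOn_of_prank_comp_zetaMap {n : ℕ} (hn : 2 ≤ n) (w₁ : Equiv.Perm (Fin (n + 1)))
    {w₂ : Fin (n + 1) → Fin (n + 1)} (hw₂ : w₂ 0 = 0)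
    (hr : prank n (fun x => w₂ (zetaMap n (w₁ x))) = n - 1) :
    Set.InjOn w₂ (Finset.univ.erase 2 : Finset (Fin (n + 1))) := by
  obtain ⟨h20, h21⟩ := fin_two_ne_zero_and_two_ne_one hn
  have himg : Finset.univ.image (fun x => w₂ (zetaMap n (w₁ x))) =
      (Finset.univ.erase 2).image w₂ :=
    calc Finset.univ.image (fun x => w₂ (zetaMap n (w₁ x)))
        = (Finset.univ.image w₁).image (w₂ ∘ zetaMap n) := by rw [Finset.image_image]; rfl
      _ = (Finset.univ.erase 2).image w₂ := by
        rw [Finset.image_univ_equiv, ← Finset.image_image, zetaMap.image_univ h21]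
  have h0 : (0 : Fin (n + 1)) ∈ (Finset.univ.erase 2).image w₂ :=
    Finset.mem_image.2 ⟨0, Finset.mem_erase.2 ⟨h20.symm, Finset.mem_univ _⟩, hw₂⟩
  -- with `0` added back, the image has `n = #(univ.erase 2)` elements
  apply Finset.injOn_of_card_image_eq
  rw [prank, himg] at hr
  rw [← Finset.card_erase_add_one h0, hr, Finset.card_erase_of_mem (Finset.mem_univ _),
    Finset.card_univ, Fintype.card_fin]
  omega

theorem stmt9 (n : ℕ) (hn : 4 ≤ n)
    (u₁ v₁ : Equiv.Perm (Fin (n + 1)))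
    (u₂ v₂ : Fin (n + 1) → Fin (n + 1)) (hv₂ : IsTn n v₂)
    (heq : (fun x => u₂ (zetaMap n (u₁ x))) = (fun x => v₂ (zetaMap n (v₁ x))))
    (hrv : prank n (fun x => v₂ (zetaMap n (v₁ x))) = n - 1) :
    (fun x => v₁ (u₁⁻¹ x)) '' ({1, 2} : Set (Fin (n + 1))) = {1, 2} := by
  obtain ⟨-, h21⟩ := fin_two_ne_zero_and_two_ne_one (n := n) (by omega)
  have hv₂_inj := injOn_of_prank_comp_zetaMap (by omega) v₁ hv₂.1 hrv
  have hcollapse : v₂ (zetaMap n (v₁ (u₁⁻¹ 1))) = v₂ (zetaMap n (v₁ (u₁⁻¹ 2))) :=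
    calc v₂ (zetaMap n (v₁ (u₁⁻¹ 1))) = u₂ (zetaMap n (u₁ (u₁⁻¹ 1))) := (congrFun heq _).symm
      _ = u₂ (zetaMap n (u₁ (u₁⁻¹ 2))) := by simp [zetaMap, h21.symm]
      _ = v₂ (zetaMap n (v₁ (u₁⁻¹ 2))) := congrFun heq _
  have hzeta := hv₂_inj (by simpa using zetaMap.ne_two h21 _)
    (by simpa using zetaMap.ne_two h21 _) hcollapse
  rw [Set.image_pair]
  exact zetaMap.pair_eq_of_eq hzeta (by simpa using h21.symm)
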